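/- arXiv:2109.13359 — 4 statements merged into one kernel-verified Lean document; each statement's English description precedes it below -/
import Mathlib

section
/- Let d ≥ 1, Ω = [-1,1]^d, δ > 0, and Ω_δ = Ω \ B(0;δ). Let f : ℝ^d → ℝ^d be L_f-Lipschitz on Ω with f(0) = 0, where 0 ∈ Ω. Let γ > 0 and ε ∈ (0, γ/(√d · L_f)). Suppose V, V* : ℝ^d → ℝ are differentiable on a neighborhood of Ω, that DV*(x) · f(x) ≤ −γ‖x‖ for all x ∈ Ω_δ, and that |∂_i V(x) − ∂_i V*(x)| ≤ ε for all x ∈ Ω_δ and every coordinate i ∈ {1,…,d}. Then DV(x) · f(x) ≤ −(γ − ε√d·L_f)‖x‖ for all x ∈ Ω_δ, and γ − ε√d·L_f > 0. -/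
open scoped RealInnerProductSpace

/-!
Since `f 0 = 0` and `0 ∈ Ω`, the Lipschitz bound gives `‖f x‖ ≤ L_f ‖x‖` on `Ω`, and coordinatewise
closeness of the gradients gives `‖DV(x) - DV*(x)‖ ≤ ε √d`. Writing
`DV·f = DV*·f + (DV - DV*)·f` and applying Cauchy–Schwarz to the second term, the orbital
derivative of `V` exceeds that of `V*` by at most `ε √d L_f ‖x‖`.
-/

theorem EuclideanSpace.norm_le_mul_sqrt_card_of_forall_abs_le {ι : Type*} [Fintype ι]
    (x : EuclideanSpace ℝ ι) {ε : ℝ} (hε : 0 ≤ ε) (h : ∀ i, |x i| ≤ ε) :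
    ‖x‖ ≤ ε * √(Fintype.card ι) := by
  calc ‖x‖ = √(∑ i, ‖x i‖ ^ 2) := EuclideanSpace.norm_eq x
    _ ≤ √(∑ _i : ι, ε ^ 2) := by
      gcongr with i
      exact (h i).trans_eq' (Real.norm_eq_abs _)
    _ = ε * √(Fintype.card ι) := by
      rw [Finset.sum_const, Finset.card_univ, nsmul_eq_mul, Real.sqrt_mul (Nat.cast_nonneg _),
        Real.sqrt_sq hε, mul_comm]

theorem real_inner_le_of_norm_sub_le {E : Type*} [NormedAddCommGroup E] [InnerProductSpace ℝ E]
    {g g' v : E} {γ η L r : ℝ} (hg' : ⟪g', v⟫ ≤ -γ * r) (hg : ‖g - g'‖ ≤ η)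
    (hv : ‖v‖ ≤ L * r) (hη : 0 ≤ η) :
    ⟪g, v⟫ ≤ -(γ - η * L) * r := by
  have hdiff : ⟪g - g', v⟫ ≤ η * (L * r) :=
    (real_inner_le_norm _ _).trans (mul_le_mul hg hv (norm_nonneg _) hη)
  rw [inner_sub_left] at hdiff
  linarith

theorem stmt_3_general (d : ℕ) (δ : ℝ)
    (Lf γ ε : ℝ) (hγ : 0 < γ)
    (hε : ε ∈ Set.Ioo (0 : ℝ) (γ / (Real.sqrt d * Lf)))
    (Ω Ωδ : Set (EuclideanSpace ℝ (Fin d)))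
    (hΩ : Ω = {x : EuclideanSpace ℝ (Fin d) | ∀ i, |x i| ≤ 1})
    (hΩδ : Ωδ = Ω \ Metric.ball 0 δ)
    (f : EuclideanSpace ℝ (Fin d) → EuclideanSpace ℝ (Fin d))
    (hf : ∀ x ∈ Ω, ∀ y ∈ Ω, ‖f x - f y‖ ≤ Lf * ‖x - y‖) (hf0 : f 0 = 0)
    (V Vstar : EuclideanSpace ℝ (Fin d) → ℝ)
    (hod : ∀ x ∈ Ωδ, (inner ℝ (gradient Vstar x) (f x) : ℝ) ≤ -γ * ‖x‖)
    (hgrad : ∀ x ∈ Ωδ, ∀ i, |gradient V x i - gradient Vstar x i| ≤ ε) :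
    (∀ x ∈ Ωδ, (inner ℝ (gradient V x) (f x) : ℝ) ≤ -(γ - ε * Real.sqrt d * Lf) * ‖x‖) ∧
    0 < γ - ε * Real.sqrt d * Lf := by
  obtain ⟨hε_pos, hε_lt⟩ := hε
  have hden : 0 < √d * Lf := (div_pos_iff_of_pos_left hγ).1 (hε_pos.trans hε_lt)
  refine ⟨fun x hx => ?_, by linarith [(lt_div_iff₀ hden).1 hε_lt]⟩
  have hxΩ : x ∈ Ω := (hΩδ ▸ hx).1
  have h0Ω : (0 : EuclideanSpace ℝ (Fin d)) ∈ Ω := by simp [hΩ]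
  have hfx : ‖f x‖ ≤ Lf * ‖x‖ := by simpa [hf0] using hf x hxΩ 0 h0Ω
  have hgrad_norm : ‖gradient V x - gradient Vstar x‖ ≤ ε * √d := by
    simpa using EuclideanSpace.norm_le_mul_sqrt_card_of_forall_abs_le
      (gradient V x - gradient Vstar x) hε_pos.le fun i => by simpa using hgrad x hx i
  exact real_inner_le_of_norm_sub_le (hod x hx) hgrad_norm hfx (by positivity)

/-- If `f` is `L_f`-Lipschitz on `Ω = [-1,1]^d` with `f 0 = 0`,
`V, V*` are differentiable on a neighborhood of `Ω`, `DV*(x)·f(x) ≤ -γ‖x‖` on `Ω_δ`,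
and the partial derivatives of `V` and `V*` differ by at most `ε < γ/(√d L_f)` on `Ω_δ`,
then `DV(x)·f(x) ≤ -(γ - ε√d L_f)‖x‖` on `Ω_δ`, and `γ - ε√d L_f > 0`. -/
theorem stmt_3 (d : ℕ) (hd : 1 ≤ d) (δ : ℝ) (hδ : 0 < δ)
    (Lf γ ε : ℝ) (hLf : 0 < Lf) (hγ : 0 < γ)
    (hε : ε ∈ Set.Ioo (0 : ℝ) (γ / (Real.sqrt d * Lf)))
    (Ω Ωδ : Set (EuclideanSpace ℝ (Fin d)))
    (hΩ : Ω = {x : EuclideanSpace ℝ (Fin d) | ∀ i, |x i| ≤ 1})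
    (hΩδ : Ωδ = Ω \ Metric.ball 0 δ)
    (f : EuclideanSpace ℝ (Fin d) → EuclideanSpace ℝ (Fin d))
    (hf : ∀ x ∈ Ω, ∀ y ∈ Ω, ‖f x - f y‖ ≤ Lf * ‖x - y‖) (hf0 : f 0 = 0)
    (V Vstar : EuclideanSpace ℝ (Fin d) → ℝ)
    (hV : ∃ U, IsOpen U ∧ Ω ⊆ U ∧ ∀ x ∈ U, DifferentiableAt ℝ V x)
    (hVstar : ∃ U, IsOpen U ∧ Ω ⊆ U ∧ ∀ x ∈ U, DifferentiableAt ℝ Vstar x)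
    (hod : ∀ x ∈ Ωδ, (inner ℝ (gradient Vstar x) (f x) : ℝ) ≤ -γ * ‖x‖)
    (hgrad : ∀ x ∈ Ωδ, ∀ i, |gradient V x i - gradient Vstar x i| ≤ ε) :
    (∀ x ∈ Ωδ, (inner ℝ (gradient V x) (f x) : ℝ) ≤ -(γ - ε * Real.sqrt d * Lf) * ‖x‖) ∧
    0 < γ - ε * Real.sqrt d * Lf :=
  stmt_3_general d δ Lf γ ε hγ hε Ω Ωδ hΩ hΩδ f hf hf0 V Vstar hod hgrad
end

section
/- Let d ≥ 1, Ω = [-1,1]^d, δ ∈ (0,1), and Ω_δ = Ω \ B(0;δ). Let γ̄ > 0, M > 0, and 0 < c < γ̄/M. Let g : ℝ^d → ℝ be M-Lipschitz on Ω. Suppose X is a finite set of points in Ω_δ such that g(x) ≤ −γ̄‖x‖ for every x ∈ X, and Ω_δ ⊆ ⋃_{x∈X} B(x; c‖x‖). Then for every y ∈ Ω_δ one has g(y) ≤ −(γ̄ − Mc)δ < 0. -/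
/-- If `g` is `M`-Lipschitz on `Ω = [-1,1]^d`, `g x ≤ -γ̄‖x‖` at finitely
many points `X ⊆ Ω_δ` whose balls `B(x; c‖x‖)` cover `Ω_δ`, and `0 < c < γ̄/M`, then
`g y ≤ -(γ̄ - Mc)δ < 0` for every `y ∈ Ω_δ`. -/
theorem stmt_5 (d : ℕ) (hd : 1 ≤ d) (δ : ℝ) (hδ : δ ∈ Set.Ioo (0 : ℝ) 1)
    (γbar M c : ℝ) (hγ : 0 < γbar) (hM : 0 < M) (hc : 0 < c) (hcM : c < γbar / M)
    (Ω Ωδ : Set (EuclideanSpace ℝ (Fin d)))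
    (hΩ : Ω = {x : EuclideanSpace ℝ (Fin d) | ∀ i, |x i| ≤ 1})
    (hΩδ : Ωδ = Ω \ Metric.ball 0 δ)
    (g : EuclideanSpace ℝ (Fin d) → ℝ)
    (hg : ∀ x ∈ Ω, ∀ y ∈ Ω, |g x - g y| ≤ M * ‖x - y‖)
    (X : Finset (EuclideanSpace ℝ (Fin d))) (hX : ↑X ⊆ Ωδ)
    (hgX : ∀ x ∈ X, g x ≤ -γbar * ‖x‖)
    (hcov : Ωδ ⊆ ⋃ x ∈ X, Metric.ball x (c * ‖x‖)) :
    ∀ y ∈ Ωδ, g y ≤ -(γbar - M * c) * δ ∧ -(γbar - M * c) * δ < 0 := by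
  intro y hy
  have hMc : 0 < γbar - M * c := by
    have := (lt_div_iff₀ hM).mp hcM
    linarith [mul_comm c M]
  have hneg : -(γbar - M * c) * δ < 0 := by
    have := hδ.1
    nlinarith
  refine ⟨?_, hneg⟩
  obtain ⟨x, hxX, hyx⟩ := by
    have := hcov hy
    simpa using this
  have hxΩδ : x ∈ Ωδ := hX hxX
  have hxΩ : x ∈ Ω := by rw [hΩδ] at hxΩδ; exact hxΩδ.1
  have hyΩ : y ∈ Ω := by rw [hΩδ] at hy; exact hy.1
  have hxδ : δ ≤ ‖x‖ := by
    rw [hΩδ] at hxΩδ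
    have := hxΩδ.2
    simpa [Metric.mem_ball, dist_zero_right] using this
  have hdist : ‖y - x‖ < c * ‖x‖ := by
    rw [dist_eq_norm] at hyx
    exact hyx
  have hlip : |g y - g x| ≤ M * ‖y - x‖ := hg y hyΩ x hxΩ
  have hgx := hgX x hxX
  have h1 : g y ≤ g x + M * ‖y - x‖ := by
    have := abs_le.mp hlip
    linarith [this.1, this.2]
  have h2 : g y ≤ -γbar * ‖x‖ + M * (c * ‖x‖) := by
    have : M * ‖y - x‖ ≤ M * (c * ‖x‖) := by
      exact le_of_lt (by exact mul_lt_mul_of_pos_left hdist hM)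
    linarith
  have : -(γbar - M * c) * ‖x‖ = -γbar * ‖x‖ + M * (c * ‖x‖) := by ring
  rw [this.symm] at h2
  calc g y ≤ -(γbar - M * c) * ‖x‖ := h2
    _ ≤ -(γbar - M * c) * δ := by nlinarith
end

section
/- Let d ≥ 1, Ω = [-1,1]^d, δ > 0, and Ω_δ = Ω \ B(0;δ). Let g : ℝ^d → ℝ be continuous with g ≥ 0 on Ω, g(0) = 0, and a := inf_{x ∈ Ω_δ} g(x) > 0. Let ε > 0 and suppose φ : ℝ^d → ℝ satisfies sup_{x ∈ Ω} |φ(x) − g(x)| ≤ min(a/2, ε/2). Then: (i) φ(x) − φ(0) ≥ 0 for all x ∈ Ω_δ; and (ii) | |φ(x) − φ(0)| − g(x) | ≤ ε for all x ∈ Ω. Consequently, for any ᾱ > 0 the functions V(x) := |φ(x) − φ(0)| + ᾱ‖x‖ and h(x) := g(x) + ᾱ‖x‖ satisfy sup_{x ∈ Ω} |V(x) − h(x)| ≤ ε. -/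
/-- If `g` is continuous, nonnegative on `Ω = [-1,1]^d` with `g 0 = 0`
and `a := inf_{Ω_δ} g > 0`, and `|φ - g| ≤ min(a/2, ε/2)` on `Ω`, then
`φ x - φ 0 ≥ 0` on `Ω_δ`, `abs (|φ x - φ 0| - g x) ≤ ε` on `Ω`, and for any `α > 0`
the functions `V x = |φ x - φ 0| + α‖x‖` and `h x = g x + α‖x‖` satisfy
`|V x - h x| ≤ ε` on `Ω`. -/
theorem stmt_8 (d : ℕ) (hd : 1 ≤ d) (δ ε : ℝ) (hδ : 0 < δ) (hε : 0 < ε)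
    (Ω Ωδ : Set (EuclideanSpace ℝ (Fin d)))
    (hΩ : Ω = {x : EuclideanSpace ℝ (Fin d) | ∀ i, |x i| ≤ 1})
    (hΩδ : Ωδ = Ω \ Metric.ball 0 δ)
    (g φ : EuclideanSpace ℝ (Fin d) → ℝ)
    (hgcont : Continuous g) (hgnn : ∀ x ∈ Ω, 0 ≤ g x) (hg0 : g 0 = 0)
    (a : ℝ) (ha : a = sInf (g '' Ωδ)) (hapos : 0 < a)
    (hφ : ∀ x ∈ Ω, |φ x - g x| ≤ min (a / 2) (ε / 2)) :
    (∀ x ∈ Ωδ, 0 ≤ φ x - φ 0) ∧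
    (∀ x ∈ Ω, abs (|φ x - φ 0| - g x) ≤ ε) ∧
    (∀ α : ℝ, 0 < α → ∀ x ∈ Ω,
      |(|φ x - φ 0| + α * ‖x‖) - (g x + α * ‖x‖)| ≤ ε) := by
  have h0Ω : (0 : EuclideanSpace ℝ (Fin d)) ∈ Ω := by
    rw [hΩ]; intro i; simp
  have hΩδΩ : Ωδ ⊆ Ω := by rw [hΩδ]; exact Set.diff_subset
  have hbdd : BddBelow (g '' Ωδ) := by
    refine ⟨0, ?_⟩
    rintro y ⟨x, hx, rfl⟩
    exact hgnn x (hΩδΩ hx)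
  have hag : ∀ x ∈ Ωδ, a ≤ g x := by
    intro x hx
    rw [ha]
    exact csInf_le hbdd ⟨x, hx, rfl⟩
  have hφ0 : |φ 0| ≤ min (a / 2) (ε / 2) := by
    have := hφ 0 h0Ω
    rwa [hg0, sub_zero] at this
  have key : ∀ x ∈ Ωδ, 0 ≤ φ x - φ 0 := by
    intro x hx
    have h1 := (hφ x (hΩδΩ hx)).trans (min_le_left _ _)
    have h2 := hφ0.trans (min_le_left _ _)
    have h3 := hag x hx
    have := abs_le.mp h1
    have := abs_le.mp h2
    linarith [this.1, this.2, (abs_le.mp h1).1]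
  have key2 : ∀ x ∈ Ω, abs (|φ x - φ 0| - g x) ≤ ε := by
    intro x hx
    have h1 := (hφ x hx).trans (min_le_right _ _)
    have h2 := hφ0.trans (min_le_right _ _)
    have hgx : g x = |g x| := (abs_of_nonneg (hgnn x hx)).symm
    calc abs (|φ x - φ 0| - g x) = abs (|φ x - φ 0| - |g x|) := by rw [← hgx]
      _ ≤ |(φ x - φ 0) - g x| := abs_abs_sub_abs_le_abs_sub _ _
      _ ≤ |φ x - g x| + |φ 0| := by
          have : (φ x - φ 0) - g x = (φ x - g x) - φ 0 := by ring
          rw [this]; exact abs_sub _ _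
      _ ≤ ε / 2 + ε / 2 := add_le_add h1 h2
      _ = ε := by ring
  refine ⟨key, key2, ?_⟩
  intro α hα x hx
  have : (|φ x - φ 0| + α * ‖x‖) - (g x + α * ‖x‖) = |φ x - φ 0| - g x := by ring
  rw [this]
  exact key2 x hx
end

section
/- Let d ≥ 1, Ω = [-1,1]^d, δ > 0, and Ω_δ = Ω \ B(0;δ). Let g, φ : ℝ^d → ℝ be continuously differentiable on a neighborhood of Ω, with g ≥ 0 on Ω, g(0) = 0, and a := inf_{x ∈ Ω_δ} g(x) > 0. Let ε > 0 and suppose sup_{x ∈ Ω} |φ(x) − g(x)| < min(a/2, ε/2) and |∂_i φ(x) − ∂_i g(x)| ≤ ε/2 for all x ∈ Ω and all i ∈ {1,…,d}. Then φ(x) − φ(0) > 0 for every x ∈ Ω_δ, and for any ᾱ > 0 the functions V(x) := |φ(x) − φ(0)| + ᾱ‖x‖ and h(x) := g(x) + ᾱ‖x‖ satisfy: |V(x) − h(x)| ≤ ε for all x ∈ Ω_δ, V is differentiable at every x in the interior of Ω_δ, and |∂_i V(x) − ∂_i h(x)| = |∂_i φ(x) − ∂_i g(x)| ≤ ε/2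 for every x in the interior of Ω_δ and every i. -/
/-!
Because `|φ - g| < a/2` on `Ω`, `g ≥ a` on `Ω_δ` and `g 0 = 0`, the difference `φ x - φ 0`
is positive on `Ω_δ`. Hence near an interior point of `Ω_δ` the absolute value in `V` is
inactive and `V - h = (φ - g) - φ 0` there, a differentiable function whose gradient is
`∇φ - ∇g`; `0 ∉ Ω_δ` makes the norm term differentiable as well.
-/

open Filter Topology

section Gradient

variable {𝕜 F : Type*} [RCLike 𝕜] [NormedAddCommGroup F] [InnerProductSpace 𝕜 F]
  [CompleteSpace F] {f g : F → 𝕜} {x : F}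

theorem gradient_fun_add (hf : DifferentiableAt 𝕜 f x) (hg : DifferentiableAt 𝕜 g x) :
    gradient (fun y => f y + g y) x = gradient f x + gradient g x := by
  simp only [gradient, fderiv_fun_add hf hg, map_add]

theorem gradient_fun_sub_const (c : 𝕜) : gradient (fun y => f y - c) x = gradient f x := by
  simp only [gradient, fderiv_sub_const]

theorem gradient_sub_gradient_of_eventuallyEq {V N : F → 𝕜} {c : 𝕜}
    (hf : DifferentiableAt 𝕜 f x) (hg : DifferentiableAt 𝕜 g x) (hN : DifferentiableAt 𝕜 N x)
    (hV : V =ᶠ[𝓝 x] fun y => f y - c + N y) :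
    gradient V x - gradient (fun y => g y + N y) x = gradient f x - gradient g x := by
  rw [hV.gradient_eq, gradient_fun_add (hf.sub_const c) hN, gradient_fun_sub_const,
    gradient_fun_add hg hN]
  abel

end Gradient

theorem differentiableAt_of_contDiffOn_nhdsSet {E F : Type*} [NormedAddCommGroup E]
    [NormedSpace ℝ E] [NormedAddCommGroup F] [NormedSpace ℝ F] {f : E → F} {s : Set E}
    (hf : ∃ U, IsOpen U ∧ s ⊆ U ∧ ContDiffOn ℝ 1 f U) {x : E} (hx : x ∈ s) :
    DifferentiableAt ℝ f x := by
  obtain ⟨U, hU, hsU, hfU⟩ := hf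
  exact (hfU.differentiableOn one_ne_zero).differentiableAt (hU.mem_nhds (hsU hx))

theorem abs_eventuallyEq_of_pos_on {E : Type*} [TopologicalSpace E] {f : E → ℝ} {s : Set E}
    (hf : ∀ y ∈ s, 0 < f y) {x : E} (hx : x ∈ interior s) :
    (fun y => |f y|) =ᶠ[𝓝 x] f := by
  filter_upwards [mem_interior_iff_mem_nhds.mp hx] with y hy
  exact abs_of_pos (hf y hy)

theorem sub_pos_of_abs_sub_lt_half {p q u v a : ℝ} (huv : v + a ≤ u) (hp : |p - u| < a / 2)
    (hq : |q - v| < a / 2) : 0 < p - q := by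
  rw [abs_lt] at hp hq
  linarith

theorem stmt_9_general (d : ℕ) (δ ε : ℝ) (hδ : 0 < δ)
    (Ω Ωδ : Set (EuclideanSpace ℝ (Fin d)))
    (hΩ : Ω = {x : EuclideanSpace ℝ (Fin d) | ∀ i, |x i| ≤ 1})
    (hΩδ : Ωδ = Ω \ Metric.ball 0 δ)
    (g φ : EuclideanSpace ℝ (Fin d) → ℝ)
    (hgC1 : ∃ U, IsOpen U ∧ Ω ⊆ U ∧ ContDiffOn ℝ 1 g U)
    (hφC1 : ∃ U, IsOpen U ∧ Ω ⊆ U ∧ ContDiffOn ℝ 1 φ U)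
    (hgnn : ∀ x ∈ Ω, 0 ≤ g x) (hg0 : g 0 = 0)
    (a : ℝ) (ha : a = sInf (g '' Ωδ))
    (hφg : ∀ x ∈ Ω, |φ x - g x| < min (a / 2) (ε / 2))
    (hgrad : ∀ x ∈ Ω, ∀ i, |gradient φ x i - gradient g x i| ≤ ε / 2)
    (α : ℝ)
    (V h : EuclideanSpace ℝ (Fin d) → ℝ)
    (hV : ∀ x, V x = |φ x - φ 0| + α * ‖x‖)
    (hh : ∀ x, h x = g x + α * ‖x‖) :
    (∀ x ∈ Ωδ, 0 < φ x - φ 0) ∧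
    (∀ x ∈ Ωδ, |V x - h x| ≤ ε) ∧
    (∀ x ∈ interior Ωδ, DifferentiableAt ℝ V x) ∧
    (∀ x ∈ interior Ωδ, ∀ i,
      gradient V x i - gradient h x i = gradient φ x i - gradient g x i ∧
      |gradient V x i - gradient h x i| ≤ ε / 2) := by
  obtain rfl : V = fun y => |φ y - φ 0| + α * ‖y‖ := funext hV
  obtain rfl : h = fun y => g y + α * ‖y‖ := funext hh
  have hΩδΩ : Ωδ ⊆ Ω := hΩδ ▸ Set.sdiff_subset
  have hφg0 := lt_min_iff.mp (hφg 0 (by simp [hΩ]))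
  have hga : ∀ x ∈ Ωδ, g 0 + a ≤ g x := fun x hx => by
    rw [hg0, zero_add, ha]
    exact csInf_le ⟨0, by rintro _ ⟨y, hy, rfl⟩; exact hgnn y (hΩδΩ hy)⟩ ⟨x, hx, rfl⟩
  have hpos : ∀ x ∈ Ωδ, 0 < φ x - φ 0 := fun x hx =>
    sub_pos_of_abs_sub_lt_half (hga x hx) (lt_min_iff.mp (hφg x (hΩδΩ hx))).1 hφg0.1
  have hloc : ∀ x ∈ interior Ωδ,
      (fun y => |φ y - φ 0| + α * ‖y‖) =ᶠ[𝓝 x] fun y => φ y - φ 0 + α * ‖y‖ := fun x hx =>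
    (abs_eventuallyEq_of_pos_on hpos hx).add EventuallyEq.rfl
  have hdiff : ∀ x ∈ interior Ωδ, DifferentiableAt ℝ φ x ∧ DifferentiableAt ℝ g x ∧
      DifferentiableAt ℝ (fun y => α * ‖y‖) x := fun x hx => by
    obtain ⟨hxΩ, hxδ⟩ : x ∈ Ω \ Metric.ball 0 δ := hΩδ ▸ interior_subset hx
    have hx0 : x ≠ 0 := by
      rintro rfl
      exact hxδ (Metric.mem_ball_self hδ)
    exact ⟨differentiableAt_of_contDiffOn_nhdsSet hφC1 hxΩ,
      differentiableAt_of_contDiffOn_nhdsSet hgC1 hxΩ,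
      (differentiableAt_id.norm ℝ hx0).const_mul α⟩
  refine ⟨hpos, fun x hx => ?_, fun x hx => ?_, fun x hx i => ?_⟩
  · have hφgx := lt_min_iff.mp (hφg x (hΩδΩ hx))
    calc |(|φ x - φ 0| + α * ‖x‖) - (g x + α * ‖x‖)| = |(φ x - g x) - (φ 0 - g 0)| := by
          rw [abs_of_pos (hpos x hx), hg0]; congr 1; ring
      _ ≤ |φ x - g x| + |φ 0 - g 0| := abs_sub _ _
      _ ≤ ε := by linarith [hφgx.2, hφg0.2]
  · obtain ⟨hφx, -, hNx⟩ := hdiff x hx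
    exact (hloc x hx).differentiableAt_iff.mpr ((hφx.sub_const _).add hNx)
  · obtain ⟨hφx, hgx, hNx⟩ := hdiff x hx
    have hi := congrArg (· i) (gradient_sub_gradient_of_eventuallyEq hφx hgx hNx (hloc x hx))
    simp only [PiLp.sub_apply] at hi
    exact ⟨hi, hi ▸ hgrad x (hΩδΩ (interior_subset hx)) i⟩

/-- If `g, φ` are `C¹` on a neighborhood of `Ω = [-1,1]^d`, `g ≥ 0` on `Ω`
with `g 0 = 0` and `a := inf_{Ω_δ} g > 0`, `|φ - g| < min(a/2, ε/2)` on `Ω`, and the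
partial derivatives of `φ` and `g` differ by at most `ε/2` on `Ω`, then
`φ x - φ 0 > 0` on `Ω_δ`, and for any `α > 0` the Lyapunov-Net
`V x = |φ x - φ 0| + α‖x‖` and target `h x = g x + α‖x‖` satisfy `|V x - h x| ≤ ε`
on `Ω_δ`, `V` is differentiable on the interior of `Ω_δ`, and there
`∂ᵢV - ∂ᵢh = ∂ᵢφ - ∂ᵢg` has absolute value at most `ε/2`. -/
theorem stmt_9 (d : ℕ) (hd : 1 ≤ d) (δ ε : ℝ) (hδ : 0 < δ) (hε : 0 < ε)
    (Ω Ωδ : Set (EuclideanSpace ℝ (Fin d)))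
    (hΩ : Ω = {x : EuclideanSpace ℝ (Fin d) | ∀ i, |x i| ≤ 1})
    (hΩδ : Ωδ = Ω \ Metric.ball 0 δ)
    (g φ : EuclideanSpace ℝ (Fin d) → ℝ)
    (hgC1 : ∃ U, IsOpen U ∧ Ω ⊆ U ∧ ContDiffOn ℝ 1 g U)
    (hφC1 : ∃ U, IsOpen U ∧ Ω ⊆ U ∧ ContDiffOn ℝ 1 φ U)
    (hgnn : ∀ x ∈ Ω, 0 ≤ g x) (hg0 : g 0 = 0)
    (a : ℝ) (ha : a = sInf (g '' Ωδ)) (hapos : 0 < a)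
    (hφg : ∀ x ∈ Ω, |φ x - g x| < min (a / 2) (ε / 2))
    (hgrad : ∀ x ∈ Ω, ∀ i, |gradient φ x i - gradient g x i| ≤ ε / 2)
    (α : ℝ) (hα : 0 < α)
    (V h : EuclideanSpace ℝ (Fin d) → ℝ)
    (hV : ∀ x, V x = |φ x - φ 0| + α * ‖x‖)
    (hh : ∀ x, h x = g x + α * ‖x‖) :
    (∀ x ∈ Ωδ, 0 < φ x - φ 0) ∧
    (∀ x ∈ Ωδ, |V x - h x| ≤ ε) ∧
    (∀ x ∈ interior Ωδ, DifferentiableAt ℝ V x) ∧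
    (∀ x ∈ interior Ωδ, ∀ i,
      gradient V x i - gradient h x i = gradient φ x i - gradient g x i ∧
      |gradient V x i - gradient h x i| ≤ ε / 2) :=
  stmt_9_general d δ ε hδ Ω Ωδ hΩ hΩδ g φ hgC1 hφC1 hgnn hg0 a ha hφg hgrad α V h hV hh
end
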